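/- arXiv:2510.21319 — 2 statements merged into one kernel-verified Lean document; each statement's English description precedes it below -/
import Mathlib

section
/- Let Q be a finite acyclic quiver without parallel paths, A = kQ, and M(V_*) = \bigoplus_i A e_i \otimes V_i \otimes e_i A, N(V_*) = \bigoplus_{\alpha: i \to j} A e_j \otimes V_i \otimes e_i A. Then there is a k-linear isomorphism Hom_{A \otimes A^{op}}(N(V_*), M(V_*)) \cong \bigoplus_{\alpha: i \to j} Hom_k(V_i, V_i \oplus V_j). -/
/- STATEMENT 6: Let Q be a finite acyclic quiver without parallel paths, A = kQ,
M(V_*) = ⊕_i A e_i ⊗ V_i ⊗ e_i A and N(V_*) = ⊕_{α : i → j} A e_j ⊗ V_i ⊗ e_i A.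
Then there is a k-linear isomorphism
  Hom_{A ⊗ A^op}(N(V_*), M(V_*)) ≅ ⊕_{α : i → j} Hom_k(V_i, V_i ⊕ V_j).

Bimodules are modeled by their components: M(V_*)_{a,b} = ⊕_{(p, ω : p⇝a, ω' : b⇝p)} V_p and
N(V_*)_{a,b} = ⊕_{(α : i→j, ω : j⇝a, ω' : b⇝i)} V_i, with structure maps the inclusions of
direct summands; bimodule homomorphisms are families of linear maps on components commuting
with all structure maps. -/

open Quiver DirectSum

set_option synthInstance.maxHeartbeats 400000
set_option maxHeartbeats 1000000

/-- The set of arrows of `Q`. -/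
abbrev Arr (Q : Type) [Quiver.{0} Q] : Type := Σ i j : Q, i ⟶ j

/-- Index of the direct summands of `M(V_*)_{a,b}`. -/
abbrev MIdx (Q : Type) [Quiver.{0} Q] (a b : Q) : Type := Σ p : Q, Path p a × Path b p

/-- The component `M(V_*)_{a,b}`. -/
abbrev Mc (F : Type) [Field F] (Q : Type) [Quiver.{0} Q]
    (V : Q → Type) [∀ p, AddCommGroup (V p)] [∀ p, Module F (V p)] (a b : Q) : Type :=
  ⨁ (t : MIdx Q a b), V t.1

/-- Index of the direct summands of `N(V_*)_{a,b}`: for each arrow `α : i → j`, pairs of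
paths `(j ⇝ a, b ⇝ i)`. -/
abbrev NIdx (Q : Type) [Quiver.{0} Q] (a b : Q) : Type :=
  Σ ar : Arr Q, Path ar.2.1 a × Path b ar.1

/-- The component `N(V_*)_{a,b}`. -/
abbrev Nc (F : Type) [Field F] (Q : Type) [Quiver.{0} Q]
    (V : Q → Type) [∀ p, AddCommGroup (V p)] [∀ p, Module F (V p)] (a b : Q) : Type :=
  ⨁ (t : NIdx Q a b), V t.1.1

open scoped Classical in
/-- Left structure map of `M(V_*)` along `γ : a ⟶ a'`. -/
noncomputable def MlAct (F : Type) [Field F] (Q : Type) [Quiver.{0} Q]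
    (V : Q → Type) [∀ p, AddCommGroup (V p)] [∀ p, Module F (V p)]
    {a a' : Q} (γ : a ⟶ a') (b : Q) : Mc F Q V a b →ₗ[F] Mc F Q V a' b :=
  DirectSum.toModule F (MIdx Q a b) _ fun t =>
    DirectSum.lof F (MIdx Q a' b) (fun s => V s.1) ⟨t.1, t.2.1.cons γ, t.2.2⟩

open scoped Classical in
/-- Right structure map of `M(V_*)` along `δ : b' ⟶ b`. -/
noncomputable def MrAct (F : Type) [Field F] (Q : Type) [Quiver.{0} Q]
    (V : Q → Type) [∀ p, AddCommGroup (V p)] [∀ p, Module F (V p)]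
    (a : Q) {b b' : Q} (δ : b' ⟶ b) : Mc F Q V a b →ₗ[F] Mc F Q V a b' :=
  DirectSum.toModule F (MIdx Q a b) _ fun t =>
    DirectSum.lof F (MIdx Q a b') (fun s => V s.1) ⟨t.1, t.2.1, (δ.toPath).comp t.2.2⟩

open scoped Classical in
/-- Left structure map of `N(V_*)` along `γ : a ⟶ a'`. -/
noncomputable def NlAct (F : Type) [Field F] (Q : Type) [Quiver.{0} Q]
    (V : Q → Type) [∀ p, AddCommGroup (V p)] [∀ p, Module F (V p)]
    {a a' : Q} (γ : a ⟶ a') (b : Q) : Nc F Q V a b →ₗ[F] Nc F Q V a' b :=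
  DirectSum.toModule F (NIdx Q a b) _ fun t =>
    DirectSum.lof F (NIdx Q a' b) (fun s => V s.1.1) ⟨t.1, t.2.1.cons γ, t.2.2⟩

open scoped Classical in
/-- Right structure map of `N(V_*)` along `δ : b' ⟶ b`. -/
noncomputable def NrAct (F : Type) [Field F] (Q : Type) [Quiver.{0} Q]
    (V : Q → Type) [∀ p, AddCommGroup (V p)] [∀ p, Module F (V p)]
    (a : Q) {b b' : Q} (δ : b' ⟶ b) : Nc F Q V a b →ₗ[F] Nc F Q V a b' :=
  DirectSum.toModule F (NIdx Q a b) _ fun t =>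
    DirectSum.lof F (NIdx Q a b') (fun s => V s.1.1) ⟨t.1, t.2.1, (δ.toPath).comp t.2.2⟩

/-- The space of bimodule homomorphisms `N(V_*) → M(V_*)`. -/
noncomputable def bimodHomNM (F : Type) [Field F] (Q : Type) [Quiver.{0} Q]
    (V : Q → Type) [∀ p, AddCommGroup (V p)] [∀ p, Module F (V p)] :
    Submodule F (∀ a b : Q, Nc F Q V a b →ₗ[F] Mc F Q V a b) where
  carrier := {f |
    (∀ (a a' b : Q) (γ : a ⟶ a'),
      (MlAct F Q V γ b).comp (f a b) = (f a' b).comp (NlAct F Q V γ b)) ∧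
    (∀ (a b b' : Q) (δ : b' ⟶ b),
      (MrAct F Q V a δ).comp (f a b) = (f a b').comp (NrAct F Q V a δ))}
  add_mem' := by
    rintro f g ⟨hf1, hf2⟩ ⟨hg1, hg2⟩
    refine ⟨fun a a' b γ => ?_, fun a b b' δ => ?_⟩
    · simp [LinearMap.comp_add, LinearMap.add_comp, hf1 a a' b γ, hg1 a a' b γ]
    · simp [LinearMap.comp_add, LinearMap.add_comp, hf2 a b b' δ, hg2 a b b' δ]
  zero_mem' := by
    refine ⟨fun a a' b γ => ?_, fun a b b' δ => ?_⟩ <;> simp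
  smul_mem' := by
    rintro c f ⟨h1, h2⟩
    refine ⟨fun a a' b γ => ?_, fun a b b' δ => ?_⟩
    · simp [LinearMap.comp_smul, LinearMap.smul_comp, h1 a a' b γ]
    · simp [LinearMap.comp_smul, LinearMap.smul_comp, h2 a b b' δ]

/-! `N(V_*)` is free as a bimodule on the spaces `V_i` placed at `e_j ⊗ e_i`, one copy for each
arrow `α : i → j`; so a bimodule map `N(V_*) → M(V_*)` is the same as a family of linear maps
`V_i → e_j M(V_*) e_i`. Since `α` is the only path from `i` to `j`, the summands of
`e_j M(V_*) e_i` are indexed by the two factorizations `α = α · e_i = e_j · α`, whence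
`e_j M(V_*) e_i ≅ V_i ⊕ V_j`. -/

lemma DirectSum.component_lof_of_ne (R : Type*) [Semiring R] {ι : Type*} [DecidableEq ι]
    {M : ι → Type*} [∀ i, AddCommMonoid (M i)] [∀ i, Module R (M i)] {i j : ι} (h : j ≠ i)
    (b : M j) : DirectSum.component R ι M i (DirectSum.lof R ι M j b) = 0 :=
  DirectSum.of_eq_of_ne j i b h.symm

lemma Quiver.Hom.ne_of_subsingleton_path {Q : Type*} [Quiver.{0} Q] {i j : Q} (α : i ⟶ j)
    [Subsingleton (Path i j)] : i ≠ j := by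
  rintro rfl
  simpa using congrArg Path.length (Subsingleton.elim α.toPath Path.nil)

abbrev FreeBimod.Idx {Q : Type*} [Quiver.{0} Q] {X : Type*} (s t : X → Q) (a b : Q) : Type _ :=
  Σ x : X, Path (t x) a × Path b (s x)

/-- The bimodule `⊕ₓ A e_{t x} ⊗ W x ⊗ e_{s x} A` over `A = kQ`, by its components `e_a (-) e_b`.
`M(V_*)` is the case `s = t = id`, `N(V_*)` the case of the arrows with `s`, `t` their source and
target, and the structure maps `MlAct`, ..., `NrAct` are definitionally `lAct` and `rAct`. -/
abbrev FreeBimod (R : Type*) [Semiring R] {Q : Type*} [Quiver.{0} Q] {X : Type*} (s t : X → Q)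
    (W : X → Type*) [∀ x, AddCommMonoid (W x)] [∀ x, Module R (W x)] (a b : Q) : Type _ :=
  ⨁ i : FreeBimod.Idx s t a b, W i.1

namespace FreeBimod

variable (R : Type*) [Semiring R] {Q : Type*} [Quiver.{0} Q] {X : Type*} (s t : X → Q)
  (W : X → Type*) [∀ x, AddCommMonoid (W x)] [∀ x, Module R (W x)]
  [∀ a b, DecidableEq (Idx s t a b)]

noncomputable def lAct {a a' : Q} (γ : a ⟶ a') (b : Q) :
    FreeBimod R s t W a b →ₗ[R] FreeBimod R s t W a' b :=
  DirectSum.toModule R _ _ fun i =>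
    DirectSum.lof R (Idx s t a' b) (fun i => W i.1) ⟨i.1, i.2.1.cons γ, i.2.2⟩

noncomputable def rAct (a : Q) {b b' : Q} (δ : b' ⟶ b) :
    FreeBimod R s t W a b →ₗ[R] FreeBimod R s t W a b' :=
  DirectSum.toModule R _ _ fun i =>
    DirectSum.lof R (Idx s t a b') (fun i => W i.1) ⟨i.1, i.2.1, δ.toPath.comp i.2.2⟩

noncomputable def lPath {a : Q} : ∀ {a' : Q}, Path a a' → ∀ b : Q,
    FreeBimod R s t W a b →ₗ[R] FreeBimod R s t W a' b
  | _, .nil, _ => LinearMap.id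
  | _, .cons ρ γ, b => (lAct R s t W γ b).comp (lPath ρ b)

noncomputable def rPath (a : Q) {b' : Q} : ∀ {b : Q}, Path b' b →
    FreeBimod R s t W a b →ₗ[R] FreeBimod R s t W a b'
  | _, .nil => LinearMap.id
  | _, .cons ρ δ => (rPath a ρ).comp (rAct R s t W a δ)

variable {s t W}

@[simp] lemma lAct_lof {a a' : Q} (γ : a ⟶ a') (b : Q) (i : Idx s t a b) (w : W i.1) :
    lAct R s t W γ b (DirectSum.lof R _ (fun i => W i.1) i w) =
      DirectSum.lof R (Idx s t a' b) (fun i => W i.1) ⟨i.1, i.2.1.cons γ, i.2.2⟩ w :=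
  DirectSum.toModule_lof R _ _

@[simp] lemma rAct_lof (a : Q) {b b' : Q} (δ : b' ⟶ b) (i : Idx s t a b) (w : W i.1) :
    rAct R s t W a δ (DirectSum.lof R _ (fun i => W i.1) i w) =
      DirectSum.lof R (Idx s t a b') (fun i => W i.1) ⟨i.1, i.2.1, δ.toPath.comp i.2.2⟩ w :=
  DirectSum.toModule_lof R _ _

lemma lof_congr {a b : Q} {x : X} {σ σ' : Path (t x) a} {τ τ' : Path b (s x)}
    (hσ : σ = σ') (hτ : τ = τ') (w : W x) :
    DirectSum.lof R (Idx s t a b) (fun i => W i.1) ⟨x, σ, τ⟩ w =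
      DirectSum.lof R (Idx s t a b) (fun i => W i.1) ⟨x, σ', τ'⟩ w := by
  subst hσ hτ; rfl

@[simp] lemma lPath_lof {a a' : Q} (ρ : Path a a') (b : Q) (x : X) (σ : Path (t x) a)
    (τ : Path b (s x)) (w : W x) :
    lPath R s t W ρ b (DirectSum.lof R (Idx s t a b) (fun i => W i.1) ⟨x, σ, τ⟩ w) =
      DirectSum.lof R (Idx s t a' b) (fun i => W i.1) ⟨x, σ.comp ρ, τ⟩ w := by
  induction ρ with
  | nil => rfl
  | cons ρ γ ih => simp [lPath, ih]

@[simp] lemma rPath_lof (a : Q) {b' b : Q} (ρ : Path b' b) (x : X) (σ : Path (t x) a)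
    (τ : Path b (s x)) (w : W x) :
    rPath R s t W a ρ (DirectSum.lof R (Idx s t a b) (fun i => W i.1) ⟨x, σ, τ⟩ w) =
      DirectSum.lof R (Idx s t a b') (fun i => W i.1) ⟨x, σ, ρ.comp τ⟩ w := by
  induction ρ with
  | nil => exact lof_congr R rfl (Path.nil_comp τ).symm w
  | cons ρ δ ih =>
    simp only [rPath, LinearMap.comp_apply, rAct_lof, ih]
    exact lof_congr R rfl (Path.comp_assoc ρ δ.toPath τ).symm w

lemma lof_eq_lPath_rPath {a b : Q} (x : X) (σ : Path (t x) a) (τ : Path b (s x)) (w : W x) :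
    DirectSum.lof R (Idx s t a b) (fun i => W i.1) ⟨x, σ, τ⟩ w =
      lPath R s t W σ b (rPath R s t W (t x) τ
        (DirectSum.lof R (Idx s t (t x) (s x)) (fun i => W i.1) ⟨x, .nil, .nil⟩ w)) := by
  rw [rPath_lof, lPath_lof]
  exact lof_congr R (Path.nil_comp σ).symm (Path.comp_nil τ).symm w

lemma rAct_comp_lPath_comp_rPath {a b b' c d : Q} (δ : b' ⟶ b) (σ : Path c a) (τ : Path b d) :
    (rAct R s t W a δ).comp ((lPath R s t W σ b).comp (rPath R s t W c τ)) =
      (lPath R s t W σ b').comp (rPath R s t W c (δ.toPath.comp τ)) := by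
  refine DirectSum.linearMap_ext R fun ⟨x, σ', τ'⟩ => LinearMap.ext fun w => ?_
  simp only [LinearMap.comp_apply, rPath_lof, lPath_lof, rAct_lof]
  exact lof_congr R rfl (Path.comp_assoc _ _ _).symm w

variable {X' : Type*} {s' t' : X' → Q} [∀ a b, DecidableEq (Idx s' t' a b)] {W' : X' → Type*}
  [∀ x, AddCommMonoid (W' x)] [∀ x, Module R (W' x)]

lemma comp_lPath {f : ∀ a b, FreeBimod R s t W a b →ₗ[R] FreeBimod R s' t' W' a b}
    (hf : ∀ (a a' b : Q) (γ : a ⟶ a'),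
      (lAct R s' t' W' γ b).comp (f a b) = (f a' b).comp (lAct R s t W γ b))
    {a a' : Q} (ρ : Path a a') (b : Q) :
    (f a' b).comp (lPath R s t W ρ b) = (lPath R s' t' W' ρ b).comp (f a b) := by
  induction ρ with
  | nil => rfl
  | cons ρ γ ih =>
    simp only [lPath]
    rw [← LinearMap.comp_assoc, ← hf, LinearMap.comp_assoc, ih, LinearMap.comp_assoc]

lemma comp_rPath {f : ∀ a b, FreeBimod R s t W a b →ₗ[R] FreeBimod R s' t' W' a b}
    (hf : ∀ (a b b' : Q) (δ : b' ⟶ b),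
      (rAct R s' t' W' a δ).comp (f a b) = (f a b').comp (rAct R s t W a δ))
    (a : Q) {b' b : Q} (ρ : Path b' b) :
    (f a b').comp (rPath R s t W a ρ) = (rPath R s' t' W' a ρ).comp (f a b) := by
  induction ρ with
  | nil => rfl
  | cons ρ δ ih =>
    simp only [rPath]
    rw [← LinearMap.comp_assoc, ih, LinearMap.comp_assoc, ← hf, LinearMap.comp_assoc]

end FreeBimod

open scoped Classical

section BimodHom

variable (F : Type) [Field F] (Q : Type) [Quiver.{0} Q]
  (V : Q → Type) [∀ p, AddCommGroup (V p)] [∀ p, Module F (V p)]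

local notation "lPathM" => FreeBimod.lPath F (fun p : Q => p) (fun p => p) V
local notation "rPathM" => FreeBimod.rPath F (fun p : Q => p) (fun p => p) V

lemma bimodHomNM_apply_lof (f : bimodHomNM F Q V) (ar : Arr Q) {a b : Q} (σ : Path ar.2.1 a)
    (τ : Path b ar.1) (v : V ar.1) :
    f.1 a b (DirectSum.lof F (NIdx Q a b) (fun i => V i.1.1) ⟨ar, σ, τ⟩ v) =
      lPathM σ b (rPathM ar.2.1 τ
        (f.1 ar.2.1 ar.1 (DirectSum.lof F (NIdx Q _ _) (fun i => V i.1.1) ⟨ar, .nil, .nil⟩ v))) := by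
  rw [FreeBimod.lof_eq_lPath_rPath F (W := fun ar : Arr Q => V ar.1),
    ← LinearMap.comp_apply (f.1 a b),
    FreeBimod.comp_lPath F (W := fun ar : Arr Q => V ar.1) (W' := V) f.2.1, LinearMap.comp_apply,
    ← LinearMap.comp_apply (f.1 ar.2.1 b),
    FreeBimod.comp_rPath F (W := fun ar : Arr Q => V ar.1) (W' := V) f.2.2, LinearMap.comp_apply]

noncomputable def extendGen (g : ∀ ar : Arr Q, V ar.1 →ₗ[F] Mc F Q V ar.2.1 ar.1)
    (a b : Q) : Nc F Q V a b →ₗ[F] Mc F Q V a b :=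
  DirectSum.toModule F (NIdx Q a b) _ fun i =>
    (lPathM i.2.1 b).comp ((rPathM i.1.2.1 i.2.2).comp (g i.1))

lemma extendGen_lof (g : ∀ ar : Arr Q, V ar.1 →ₗ[F] Mc F Q V ar.2.1 ar.1) (ar : Arr Q)
    {a b : Q} (σ : Path ar.2.1 a) (τ : Path b ar.1) (v : V ar.1) :
    extendGen F Q V g a b (DirectSum.lof F (NIdx Q a b) (fun i => V i.1.1) ⟨ar, σ, τ⟩ v) =
      lPathM σ b (rPathM ar.2.1 τ (g ar v)) :=
  DirectSum.toModule_lof F _ _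

lemma extendGen_mem (g : ∀ ar : Arr Q, V ar.1 →ₗ[F] Mc F Q V ar.2.1 ar.1) :
    extendGen F Q V g ∈ bimodHomNM F Q V := by
  refine ⟨fun a a' b γ => ?_, fun a b b' δ => ?_⟩ <;>
    refine DirectSum.linearMap_ext F fun ⟨ar, σ, τ⟩ => LinearMap.ext fun v => ?_ <;>
    simp only [LinearMap.comp_apply, NlAct, NrAct, DirectSum.toModule_lof, extendGen_lof]
  · rfl
  · exact LinearMap.congr_fun (FreeBimod.rAct_comp_lPath_comp_rPath F δ σ τ) (g ar v)

noncomputable def restrictGen (f : ∀ a b, Nc F Q V a b →ₗ[F] Mc F Q V a b) (ar : Arr Q) :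
    V ar.1 →ₗ[F] Mc F Q V ar.2.1 ar.1 :=
  (f ar.2.1 ar.1).comp (DirectSum.lof F (NIdx Q _ _) (fun i => V i.1.1) ⟨ar, .nil, .nil⟩)

lemma restrictGen_extendGen (g : ∀ ar : Arr Q, V ar.1 →ₗ[F] Mc F Q V ar.2.1 ar.1) :
    restrictGen F Q V (extendGen F Q V g) = g :=
  funext fun ar => LinearMap.ext fun v => extendGen_lof F Q V g ar _ _ v

lemma extendGen_restrictGen (f : bimodHomNM F Q V) :
    extendGen F Q V (restrictGen F Q V f.1) = f.1 := by
  refine funext₂ fun a b => DirectSum.linearMap_ext F fun ⟨ar, σ, τ⟩ => LinearMap.ext fun v => ?_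
  rw [LinearMap.comp_apply, LinearMap.comp_apply, extendGen_lof, bimodHomNM_apply_lof F Q V f]
  rfl

noncomputable def bimodHomNMEquivGen :
    bimodHomNM F Q V ≃ₗ[F] ∀ ar : Arr Q, V ar.1 →ₗ[F] Mc F Q V ar.2.1 ar.1 where
  toFun f := restrictGen F Q V f.1
  map_add' _ _ := rfl
  map_smul' _ _ := rfl
  invFun g := ⟨extendGen F Q V g, extendGen_mem F Q V g⟩
  left_inv f := Subtype.ext (extendGen_restrictGen F Q V f)
  right_inv := restrictGen_extendGen F Q V

end BimodHom

lemma MIdx.eq_or_eq_of_hom {Q : Type} [Quiver.{0} Q] {i j : Q} (α : i ⟶ j)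
    [Subsingleton (Path i j)] (s : MIdx Q j i) :
    s = ⟨i, α.toPath, .nil⟩ ∨ s = ⟨j, .nil, α.toPath⟩ := by
  obtain ⟨p, σ, τ⟩ := s
  have hlen : τ.length + σ.length = 1 := by
    rw [← Path.length_comp, Subsingleton.elim (τ.comp σ) α.toPath, Path.length_toPath]
  rcases (by omega : τ.length = 0 ∨ σ.length = 0) with h | h
  · obtain rfl := Path.eq_of_length_zero τ h
    obtain rfl := Path.eq_nil_of_length_zero τ h
    exact .inl (by rw [Subsingleton.elim σ α.toPath])
  · obtain rfl := Path.eq_of_length_zero σ h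
    obtain rfl := Path.eq_nil_of_length_zero σ h
    exact .inr (by rw [Subsingleton.elim τ α.toPath])

noncomputable def mcEquivOfHom (F : Type) [Field F] (Q : Type) [Quiver.{0} Q]
    (V : Q → Type) [∀ p, AddCommGroup (V p)] [∀ p, Module F (V p)] {i j : Q} (α : i ⟶ j)
    [Subsingleton (Path i j)] : Mc F Q V j i ≃ₗ[F] V i × V j := by
  let s₁ : MIdx Q j i := ⟨i, α.toPath, .nil⟩
  let s₂ : MIdx Q j i := ⟨j, .nil, α.toPath⟩
  have hne : s₁ ≠ s₂ := fun h => α.ne_of_subsingleton_path (congrArg Sigma.fst h)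
  refine .symm <| .ofLinearMap
    ((DirectSum.lof F _ (fun s => V s.1) s₁).coprod (DirectSum.lof F _ (fun s => V s.1) s₂))
    ((DirectSum.component F _ (fun s => V s.1) s₁).prod
      (DirectSum.component F _ (fun s => V s.1) s₂)) ?_ ?_
  · refine DirectSum.linearMap_ext F fun s => LinearMap.ext fun v => ?_
    rcases MIdx.eq_or_eq_of_hom α s with rfl | rfl
    · simp [DirectSum.component_lof_of_ne F hne, s₁]
    · simp [DirectSum.component_lof_of_ne F hne.symm, s₂]
  · ext v <;> simp [DirectSum.component_lof_of_ne F (M := fun s => V s.1) hne,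
      DirectSum.component_lof_of_ne F (M := fun s => V s.1) hne.symm]

/-- There is a `k`-linear isomorphism
`Hom_{A ⊗ A^op}(N(V_*), M(V_*)) ≅ ⊕_{α : i → j} Hom_k(V_i, V_i ⊕ V_j)`. -/
theorem bimodHomNM_iso (F : Type) [Field F] (Q : Type) [Quiver.{0} Q]
    [Fintype Q] [∀ a b : Q, Fintype (a ⟶ b)]
    (hacyclic : ∀ (a : Q) (p : Path a a), p = Path.nil)
    (hnopar : ∀ (a b : Q) (p q : Path a b), p = q)
    (V : Q → Type) [∀ p, AddCommGroup (V p)] [∀ p, Module F (V p)]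
    [∀ p, FiniteDimensional F (V p)] :
    Nonempty (↥(bimodHomNM F Q V) ≃ₗ[F]
      ∀ ar : Arr Q, (V ar.1 →ₗ[F] V ar.1 × V ar.2.1)) := by
  have (ar : Arr Q) : Subsingleton (Path ar.1 ar.2.1) := ⟨hnopar _ _⟩
  exact ⟨(bimodHomNMEquivGen F Q V).trans <|
    .piCongrRight fun ar => .congrRight (mcEquivOfHom F Q V ar.2.2)⟩
end

section
/- Let Q be a finite acyclic quiver without parallel paths. With M(V_*) = \bigoplus_i A e_i \otimes V_i \otimes e_i A and N(V_*) = \bigoplus_{\alpha: i \to j} A e_j \otimes V_i \otimes e_i A, the difference of dimension vectors dim M(V_*) - dim N(V_*) equals the vector f, where f_{i,j} = dim V_i if there exists a path from j to i in Q, and f_{i,j} = 0 otherwise. Concretely: for all vertices i, j, dim_k e_i M(V_*) e_j - dim_k e_i N(V_*) e_j = f_{i,j}. -/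
/-!
Let `P` be the path-counting matrix and `A` the adjacency matrix of `Q`. Splitting off the first
arrow of a path gives `P = 1 + A P`; multiplying by `dim V_p · P_{j,p}` and summing over `p`, the
identity term is `dim V_i · P_{j,i}` and the rest is the sum over arrows defining `N(V_*)`.
Without parallel paths `P_{j,i}` is `1` or `0` according as `i` is reachable from `j`.
-/

open Quiver

theorem Fintype.card_eq_ite_nonempty {α : Type*} [Fintype α] [Subsingleton α]
    [Decidable (Nonempty α)] : Fintype.card α = if Nonempty α then 1 else 0 := by
  split_ifs with h
  · exact le_antisymm (Fintype.card_le_one_iff_subsingleton.2 ‹_›) (Fintype.card_pos_iff.2 h)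
  · exact Fintype.card_eq_zero_iff.2 (not_nonempty_iff.1 h)

namespace Quiver.Path

variable {V : Type*} [Quiver V]

abbrev FirstArrowSplit (a b : V) := PLift (a = b) ⊕ Σ c, (a ⟶ c) × Path c b

def ofFirstArrowSplit {a b : V} : FirstArrowSplit a b → Path a b
  | .inl ⟨h⟩ => h ▸ nil
  | .inr ⟨_, e, q⟩ => e.toPath.comp q

def firstArrowSplit {a : V} : {b : V} → Path a b → FirstArrowSplit a b
  | _, nil => .inl ⟨rfl⟩
  | _, cons q f =>
    match firstArrowSplit q with
    | .inl ⟨h⟩ => .inr ⟨_, h ▸ f, nil⟩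
    | .inr ⟨c, e, q'⟩ => .inr ⟨c, e, q'.cons f⟩

theorem firstArrowSplit_ofFirstArrowSplit {a b : V} (x : FirstArrowSplit a b) :
    firstArrowSplit (ofFirstArrowSplit x) = x := by
  rcases x with ⟨⟨rfl⟩⟩ | ⟨c, e, q⟩
  · rfl
  · induction q with
    | nil => rfl
    | cons q f ih =>
      change firstArrowSplit ((e.toPath.comp q).cons f) = _
      rw [firstArrowSplit, show firstArrowSplit (e.toPath.comp q) = _ from ih]

theorem ofFirstArrowSplit_firstArrowSplit {a b : V} (p : Path a b) :
    ofFirstArrowSplit (firstArrowSplit p) = p := by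
  induction p with
  | nil => rfl
  | cons q f ih =>
    rw [firstArrowSplit]
    rcases h : firstArrowSplit q with ⟨⟨rfl⟩⟩ | ⟨c, e, q'⟩ <;> rw [h] at ih <;> subst ih <;> rfl

def firstArrowEquiv (a b : V) : Path a b ≃ FirstArrowSplit a b :=
  ⟨firstArrowSplit, ofFirstArrowSplit, ofFirstArrowSplit_firstArrowSplit,
    firstArrowSplit_ofFirstArrowSplit⟩

variable [Fintype V] [∀ a b : V, Fintype (a ⟶ b)]

theorem sum_sigma_hom {M : Type*} [AddCommMonoid M] (f : V → V → M) :
    ∑ e : Σ p q : V, p ⟶ q, f e.1 e.2.1 = ∑ p, ∑ q, Fintype.card (p ⟶ q) • f p q := by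
  rw [Fintype.sum_sigma]
  refine Finset.sum_congr rfl fun p _ => ?_
  rw [Fintype.sum_sigma]
  exact Finset.sum_congr rfl fun q _ => by rw [← Finset.card_univ, ← Finset.sum_const]

variable [DecidableEq V] [∀ a b : V, Fintype (Path a b)]

theorem card_eq_ite_add_sum (a b : V) :
    Fintype.card (Path a b) =
      (if a = b then 1 else 0) + ∑ c, Fintype.card (a ⟶ c) * Fintype.card (Path c b) := by
  rw [Fintype.card_congr (firstArrowEquiv a b), Fintype.card_sum, Fintype.card_sigma]
  simp only [Fintype.card_prod]
  congr 1
  split_ifs with h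
  · exact Fintype.card_eq_one_iff.2 ⟨⟨h⟩, fun _ => rfl⟩
  · exact Fintype.card_eq_zero_iff.2 ⟨fun x => h x.down⟩

theorem sum_mul_card_path_mul_card_path (w : V → ℕ) (i j : V) :
    ∑ p, w p * (Fintype.card (Path p i) * Fintype.card (Path j p)) =
      ∑ e : Σ p q : V, p ⟶ q, w e.1 * (Fintype.card (Path e.2.1 i) * Fintype.card (Path j e.1)) +
        w i * Fintype.card (Path j i) := by
  have hsplit : ∀ p, w p * (Fintype.card (Path p i) * Fintype.card (Path j p)) =
      (if p = i then w i * Fintype.card (Path j i) else 0) +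
        ∑ q, Fintype.card (p ⟶ q) * (w p * (Fintype.card (Path q i) * Fintype.card (Path j p))) := by
    intro p
    rw [card_eq_ite_add_sum p i, add_mul, mul_add, Finset.sum_mul, Finset.mul_sum]
    congr 1
    · split_ifs with h
      · rw [h, one_mul]
      · rw [zero_mul, mul_zero]
    · exact Finset.sum_congr rfl fun q _ => by ring
  rw [Finset.sum_congr rfl fun p _ => hsplit p, Finset.sum_add_distrib, Finset.sum_ite_eq',
    if_pos (Finset.mem_univ i), add_comm,
    sum_sigma_hom fun p q => w p * (Fintype.card (Path q i) * Fintype.card (Path j p))]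
  simp only [smul_eq_mul]

end Quiver.Path

open scoped Classical in
/-- For every pair of vertices `(i,j)`,
`dim e_i M(V_*) e_j - dim e_i N(V_*) e_j = f_{i,j}`. -/
theorem dim_M_sub_dim_N (F : Type) [Field F] (Q : Type) [Quiver.{0} Q]
    [Fintype Q] [∀ a b : Q, Fintype (a ⟶ b)] [∀ a b : Q, Fintype (Path a b)]
    (hacyclic : ∀ (a : Q) (p : Path a a), p = Path.nil)
    (hnopar : ∀ (a b : Q) (p q : Path a b), p = q)
    (V : Q → Type) [∀ p, AddCommGroup (V p)] [∀ p, Module F (V p)]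
    [∀ p, FiniteDimensional F (V p)] (i j : Q) :
    (∑ p : Q, Module.finrank F (V p) *
        (Fintype.card (Path p i) * Fintype.card (Path j p))) =
      (∑ ar : Arr Q, Module.finrank F (V ar.1) *
        (Fintype.card (Path ar.2.1 i) * Fintype.card (Path j ar.1))) +
      (if Nonempty (Path j i) then Module.finrank F (V i) else 0) := by
  have : Subsingleton (Path j i) := ⟨hnopar j i⟩
  rw [Path.sum_mul_card_path_mul_card_path, Fintype.card_eq_ite_nonempty (α := Path j i),
    mul_ite, mul_one, mul_zero]
end
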